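/- arXiv:2012.11573 — 4 statements merged into one kernel-verified Lean document; each statement's English description precedes it below -/
import Mathlib

section
/- For a real sequence y, integers τ < t, and real values s1, s2, the residual sum of squares cost C(y_{(τ+1):t}, s1, s2) = Σ_{i=τ+1}^{t} (y_i − (s1 + (s2−s1)(i−τ)/(t−τ)))² satisfies the closed-form expression C = S²_t − S²_τ − (2/(t−τ))((s1·t − s2·τ)(S¹_t − S¹_τ) + (s2−s1)(S⁺_t − S⁺_τ)) + (s2² − s1²)/2 + ((s1² + s1·s2 + s2²)/3)(t−τ) + (s2−s1)²/(6(t−τ)), where S¹_t = Σ_{i=1}^t y_i, S²_t = Σ_{i=1}^t y_i², and S⁺_t = Σ_{i=1}^t i·y_i. -/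
/-
Writing `d = t - τ`, the interpolating line is `L i = ((s1 t - s2 τ) + (s2 - s1) i) / d`.
Expanding `(y i - L i)²` splits the cost into `∑ y i²`, a cross term that is linear in
`∑ y i` and `∑ i y i`, and `∑ L i²`, which only involves the power sums `∑ (i - τ)` and
`∑ (i - τ)²` over `(τ, t]`; Faulhaber's formulas for these give the last three summands.
-/

open Finset

/-- Residual sum of squares for fitting `y` on `(a, b]` by the linear
interpolation from value `s1` at time `a` to value `s2` at time `b`. -/
noncomputable def cost (y : ℕ → ℝ) (a b : ℕ) (s1 s2 : ℝ) : ℝ :=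
  ∑ i ∈ Finset.Ioc a b,
    (y i - (s1 + (s2 - s1) * (((i : ℝ) - a) / ((b : ℝ) - a)))) ^ 2

theorem Finset.sum_Icc_one_sub_sum_Icc_one {M : Type*} [AddCommGroup M] (f : ℕ → M)
    {a b : ℕ} (hab : a ≤ b) :
    ∑ i ∈ Icc 1 b, f i - ∑ i ∈ Icc 1 a, f i = ∑ i ∈ Ioc a b, f i := by
  have hIcc (n : ℕ) : Icc 1 n = Ioc 0 n := Icc_add_one_left_eq_Ioc 0 n
  rw [hIcc, hIcc, ← sum_Ioc_consecutive f (Nat.zero_le a) hab, add_sub_cancel_left]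

theorem sum_Ioc_cast_sub (a b : ℕ) (hab : a ≤ b) :
    ∑ i ∈ Ioc a b, ((i : ℝ) - a) = ((b : ℝ) - a) * ((b : ℝ) - a + 1) / 2 := by
  induction b, hab using Nat.le_induction with
  | base => simp
  | succ n han ih =>
    rw [sum_Ioc_succ_top han, ih]
    push_cast
    ring

theorem sum_Ioc_cast_sub_sq (a b : ℕ) (hab : a ≤ b) :
    ∑ i ∈ Ioc a b, ((i : ℝ) - a) ^ 2 =
      ((b : ℝ) - a) * ((b : ℝ) - a + 1) * (2 * ((b : ℝ) - a) + 1) / 6 := by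
  induction b, hab using Nat.le_induction with
  | base => simp
  | succ n han ih =>
    rw [sum_Ioc_succ_top han, ih]
    push_cast
    ring

section Interpolation

variable {τ t : ℕ} (s1 s2 : ℝ)

theorem sum_mul_interpolation (y : ℕ → ℝ) (h : τ ≠ t) :
    ∑ i ∈ Ioc τ t, y i * (s1 + (s2 - s1) * (((i : ℝ) - τ) / ((t : ℝ) - τ))) =
      ((s1 * t - s2 * τ) * ∑ i ∈ Ioc τ t, y i
        + (s2 - s1) * ∑ i ∈ Ioc τ t, (i : ℝ) * y i) / ((t : ℝ) - τ) := by
  have hd : (t : ℝ) - τ ≠ 0 := sub_ne_zero.2 (by exact_mod_cast h.symm)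
  rw [mul_sum, mul_sum, ← sum_add_distrib, sum_div]
  refine sum_congr rfl fun i _ => ?_
  field_simp
  ring

theorem sum_interpolation_sq (h : τ < t) :
    ∑ i ∈ Ioc τ t, (s1 + (s2 - s1) * (((i : ℝ) - τ) / ((t : ℝ) - τ))) ^ 2 =
      (s2 ^ 2 - s1 ^ 2) / 2 + ((s1 ^ 2 + s1 * s2 + s2 ^ 2) / 3) * ((t : ℝ) - τ)
        + (s2 - s1) ^ 2 / (6 * ((t : ℝ) - τ)) := by
  have hd : (t : ℝ) - τ ≠ 0 := sub_ne_zero.2 (by exact_mod_cast h.ne')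
  have hcard : ((#(Ioc τ t) : ℕ) : ℝ) = (t : ℝ) - τ := by
    rw [Nat.card_Ioc, Nat.cast_sub h.le]
  simp only [add_sq, mul_pow, div_pow, sum_add_distrib, ← mul_sum, ← sum_div,
    sum_const, nsmul_eq_mul, hcard, sum_Ioc_cast_sub τ t h.le, sum_Ioc_cast_sub_sq τ t h.le]
  field_simp
  ring

end Interpolation

theorem cost_closed_form (y : ℕ → ℝ) (τ t : ℕ) (h : τ < t) (s1 s2 : ℝ) :
    cost y τ t s1 s2 =
      (∑ i ∈ Finset.Icc 1 t, (y i) ^ 2) - (∑ i ∈ Finset.Icc 1 τ, (y i) ^ 2)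
      - (2 / ((t : ℝ) - τ)) *
          ((s1 * t - s2 * τ) *
              ((∑ i ∈ Finset.Icc 1 t, y i) - (∑ i ∈ Finset.Icc 1 τ, y i))
            + (s2 - s1) *
              ((∑ i ∈ Finset.Icc 1 t, (i : ℝ) * y i)
                - (∑ i ∈ Finset.Icc 1 τ, (i : ℝ) * y i)))
      + (s2 ^ 2 - s1 ^ 2) / 2
      + ((s1 ^ 2 + s1 * s2 + s2 ^ 2) / 3) * ((t : ℝ) - τ)
      + (s2 - s1) ^ 2 / (6 * ((t : ℝ) - τ)) := by
  simp only [sum_Icc_one_sub_sum_Icc_one _ h.le]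
  rw [cost]
  simp only [sub_sq, sum_add_distrib, sum_sub_distrib, mul_assoc, ← mul_sum,
    sum_mul_interpolation s1 s2 y h.ne, sum_interpolation_sq s1 s2 h]
  ring
end

section
/- The function v ↦ C(y_{(t'+1):t}, v, ṽ) (the residual sum of squares of the linear interpolation from value v at time t' to value ṽ at time t) is a quadratic function of v with positive leading coefficient, and its unique global minimizer is v* = (6/((t−t'−1)(2(t−t')−1))) · Σ_{i=t'+1}^{t} (t−i)·y_i − ṽ·(t−t'+1)/(2(t−t')−1). -/
/-!
With `w i = (b - i)/(b - a)` and `u i = (i - a)/(b - a)` one has `1 - u i = w i`, so the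
residual of the interpolant is `(y i - s2 * u i) - s1 * w i` and the cost is a quadratic in `s1`
with leading coefficient `∑ w i ^ 2`, strictly minimized at its vertex
`∑ w i (y i - s2 u i) / ∑ w i ^ 2`.
Substituting `k = b - i`, the two sums `∑ (b - i)^2` and `∑ (b - i)(i - a)` reduce to the power
sums `∑ k` and `∑ k ^ 2` over `k < b - a`, which yields the closed form of the vertex.
-/

open Finset

theorem quadratic_lt_of_ne {a b c x₀ x : ℝ} (ha : 0 < a) (hb : b = -2 * a * x₀)
    (hx : x ≠ x₀) :
    a * x₀ ^ 2 + b * x₀ + c < a * x ^ 2 + b * x + c := by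
  have hdiff : a * x ^ 2 + b * x + c - (a * x₀ ^ 2 + b * x₀ + c) = a * (x - x₀) ^ 2 := by
    rw [hb]; ring
  have hx' : x - x₀ ≠ 0 := sub_ne_zero.mpr hx
  have hpos : 0 < a * (x - x₀) ^ 2 := by positivity
  linarith

theorem sum_sub_mul_sq {ι : Type*} (s : Finset ι) (r w : ι → ℝ) (x : ℝ) :
    ∑ i ∈ s, (r i - x * w i) ^ 2 =
      (∑ i ∈ s, w i ^ 2) * x ^ 2 + (-2 * ∑ i ∈ s, w i * r i) * x + ∑ i ∈ s, r i ^ 2 := by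
  simp only [sum_mul, mul_sum, ← sum_add_distrib]
  exact sum_congr rfl fun i _ ↦ by ring

theorem sum_range_cast (n : ℕ) : ∑ k ∈ range n, (k : ℝ) = n * (n - 1) / 2 := by
  induction n with
  | zero => simp
  | succ n ih => rw [sum_range_succ, ih]; push_cast; ring

theorem sum_range_cast_sq (n : ℕ) :
    ∑ k ∈ range n, (k : ℝ) ^ 2 = (n - 1) * n * (2 * n - 1) / 6 := by
  induction n with
  | zero => simp
  | succ n ih => rw [sum_range_succ, ih]; push_cast; ring

theorem sum_Ioc_comp_sub_eq_sum_range {M : Type*} [AddCommMonoid M] {a b : ℕ} (hab : a ≤ b)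
    (g : ℝ → M) :
    ∑ i ∈ Ioc a b, g ((b : ℝ) - i) = ∑ k ∈ range (b - a), g k := by
  refine sum_nbij' (fun i ↦ b - i) (fun k ↦ b - k) ?_ ?_ ?_ ?_ ?_ <;>
    intro i hi <;> simp only [mem_Ioc, mem_range] at hi ⊢
  · omega
  · omega
  · omega
  · omega
  · rw [Nat.cast_sub hi.2]

theorem sum_Ioc_sub_sq {a b : ℕ} (hab : a ≤ b) :
    ∑ i ∈ Ioc a b, ((b : ℝ) - i) ^ 2 = ((b : ℝ) - a - 1) * (b - a) * (2 * (b - a) - 1) / 6 := by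
  rw [sum_Ioc_comp_sub_eq_sum_range hab (· ^ 2), sum_range_cast_sq, Nat.cast_sub hab]

theorem sum_Ioc_sub_mul_sub {a b : ℕ} (hab : a ≤ b) :
    ∑ i ∈ Ioc a b, ((b : ℝ) - i) * (i - a) = ((b : ℝ) - a - 1) * (b - a) * (b - a + 1) / 6 := by
  have hsplit : ∀ i ∈ Ioc a b, ((b : ℝ) - i) * (i - a) = (b - a) * (b - i) - (b - i) ^ 2 :=
    fun i _ ↦ by ring
  rw [sum_congr rfl hsplit, sum_sub_distrib, ← mul_sum,
    sum_Ioc_comp_sub_eq_sum_range hab (fun x ↦ x), sum_range_cast, sum_Ioc_sub_sq hab,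
    Nat.cast_sub hab]
  ring

theorem sum_Ioc_sub_div_sq {a b : ℕ} (hab : a < b) :
    ∑ i ∈ Ioc a b, (((b : ℝ) - i) / (b - a)) ^ 2 =
      ((b : ℝ) - a - 1) * (2 * (b - a) - 1) / (6 * (b - a)) := by
  have hba : (b : ℝ) - a ≠ 0 := sub_ne_zero.mpr (by exact_mod_cast hab.ne')
  simp only [div_pow, ← sum_div, sum_Ioc_sub_sq hab.le]
  field_simp

theorem sum_Ioc_sub_div_mul_sub {a b : ℕ} (hab : a < b) (y : ℕ → ℝ) (s : ℝ) :
    ∑ i ∈ Ioc a b, ((b : ℝ) - i) / (b - a) * (y i - s * (((i : ℝ) - a) / (b - a))) =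
      (∑ i ∈ Ioc a b, ((b : ℝ) - i) * y i) / (b - a)
        - s * ((b : ℝ) - a - 1) * (b - a + 1) / (6 * (b - a)) := by
  have hba : (b : ℝ) - a ≠ 0 := sub_ne_zero.mpr (by exact_mod_cast hab.ne')
  have hsplit : ∀ i ∈ Ioc a b, ((b : ℝ) - i) / (b - a) * (y i - s * (((i : ℝ) - a) / (b - a))) =
      ((b : ℝ) - i) * y i / (b - a) - s * (((b : ℝ) - i) * (i - a)) / (b - a) ^ 2 :=
    fun i _ ↦ by field_simp
  rw [sum_congr rfl hsplit, sum_sub_distrib, ← sum_div, ← sum_div, ← mul_sum,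
    sum_Ioc_sub_mul_sub hab.le]
  field_simp

theorem cost_eq_sum_sub_mul_sq (y : ℕ → ℝ) {a b : ℕ} (hab : a < b) (s1 s2 : ℝ) :
    cost y a b s1 s2 = ∑ i ∈ Ioc a b,
      ((y i - s2 * (((i : ℝ) - a) / ((b : ℝ) - a)))
        - s1 * (((b : ℝ) - i) / ((b : ℝ) - a))) ^ 2 := by
  have hba : (b : ℝ) - a ≠ 0 := sub_ne_zero.mpr (by exact_mod_cast hab.ne')
  refine sum_congr rfl fun i _ ↦ ?_
  congr 1
  field_simp
  ring

theorem cost_quadratic_in_first_state (y : ℕ → ℝ) (t' t : ℕ) (h : t' + 1 < t)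
    (vt : ℝ) :
    0 < ∑ i ∈ Finset.Ioc t' t, (((t : ℝ) - i) / ((t : ℝ) - t')) ^ 2 ∧
    (∃ B C0 : ℝ, ∀ v : ℝ,
      cost y t' t v vt =
        (∑ i ∈ Finset.Ioc t' t, (((t : ℝ) - i) / ((t : ℝ) - t')) ^ 2) * v ^ 2
          + B * v + C0) ∧
    (∀ v : ℝ,
      v ≠ 6 / (((t : ℝ) - t' - 1) * (2 * ((t : ℝ) - t') - 1)) *
            (∑ i ∈ Finset.Ioc t' t, ((t : ℝ) - i) * y i)
          - vt * ((t : ℝ) - t' + 1) / (2 * ((t : ℝ) - t') - 1) →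
      cost y t' t
          (6 / (((t : ℝ) - t' - 1) * (2 * ((t : ℝ) - t') - 1)) *
              (∑ i ∈ Finset.Ioc t' t, ((t : ℝ) - i) * y i)
            - vt * ((t : ℝ) - t' + 1) / (2 * ((t : ℝ) - t') - 1)) vt
        < cost y t' t v vt) := by
  have hd : (1 : ℝ) < (t : ℝ) - t' := by
    have : (t' : ℝ) + 1 < t := by exact_mod_cast h
    linarith
  have hd₀ : (t : ℝ) - t' ≠ 0 := by linarith
  have hd₁ : (t : ℝ) - t' - 1 ≠ 0 := by linarith
  have hd₂ : 2 * ((t : ℝ) - t') - 1 ≠ 0 := by linarith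
  set A := ∑ i ∈ Ioc t' t, (((t : ℝ) - i) / ((t : ℝ) - t')) ^ 2
  set B := -2 * ∑ i ∈ Ioc t' t,
    ((t : ℝ) - i) / ((t : ℝ) - t') * (y i - vt * (((i : ℝ) - t') / ((t : ℝ) - t')))
  have hcost : ∀ v, cost y t' t v vt = A * v ^ 2 + B * v +
      ∑ i ∈ Ioc t' t, (y i - vt * (((i : ℝ) - t') / ((t : ℝ) - t'))) ^ 2 :=
    fun v ↦ by rw [cost_eq_sum_sub_mul_sq y (by omega), sum_sub_mul_sq]
  have hA : A = ((t : ℝ) - t' - 1) * (2 * ((t : ℝ) - t') - 1) / (6 * ((t : ℝ) - t')) :=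
    sum_Ioc_sub_div_sq (by omega)
  have hA_pos : 0 < A := by
    rw [hA]; exact div_pos (mul_pos (by linarith) (by linarith)) (by linarith)
  refine ⟨hA_pos, ⟨B, _, hcost⟩, fun v hv ↦ ?_⟩
  rw [hcost, hcost]
  refine quadratic_lt_of_ne hA_pos ?_ hv
  simp only [B]
  rw [sum_Ioc_sub_div_mul_sub (by omega) y vt, hA]
  field_simp
end

section
/- The dynamic programming update rule for the change-in-slope optimal partitioning holds: defining Q_t(v) as the minimum over all segmentations 0 = τ_0 < τ_1 < ⋯ < τ_{k+1} = t and state sequences s_0, …, s_{k+1} ∈ S with s_{k+1} = v of Σ_{i=0}^{k} (C(y_{(τ_i+1):τ_{i+1}}, s_i, s_{i+1}) + β) − β, with Q_0(v) = −β for all v, one has for all t ≥ 1 and v ∈ S: Q_t(v) = min over t' ∈ {0,…,t−1} and u ∈ S of (Q_{t'}(u) + C(y_{(t'+1):t}, u, v) + β). -/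
open Finset

/-- The set of penalized total costs of all segmentations of `{1, …, t}` into
consecutive segments with endpoint states in `S` and final state `v`. -/
def segCosts (y : ℕ → ℝ) (S : Finset ℝ) (β : ℝ) (t : ℕ) (v : ℝ) : Set ℝ :=
  { c | ∃ (k : ℕ) (τ : ℕ → ℕ) (s : ℕ → ℝ),
      τ 0 = 0 ∧ τ (k + 1) = t ∧ (∀ i ≤ k, τ i < τ (i + 1)) ∧
      (∀ i ≤ k + 1, s i ∈ S) ∧ s (k + 1) = v ∧
      c = (∑ i ∈ Finset.range (k + 1),
            (cost y (τ i) (τ (i + 1)) (s i) (s (i + 1)) + β)) - β }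

/-- The optimal penalized cost up to time `t` with inferred value `v` at `t`. -/
noncomputable def Qval (y : ℕ → ℝ) (S : Finset ℝ) (β : ℝ) (t : ℕ) (v : ℝ) : ℝ :=
  if t = 0 then -β else sInf (segCosts y S β t v)

/-!
Splitting off the last segment of a segmentation of `{1, …, t}` identifies the set of its
costs with the finite union, over the last changepoint `t' < t` and the state `u` there, of the
prefix-cost sets at `(t', u)` shifted by `cost y t' t u v + β`. The infimum of a finite union of
nonempty sets bounded below (here by `-β`, as `β > 0`) is the least of their infima, and
shifting commutes with `sInf`.
-/

theorem csInf_biUnion_of_finite {α ι : Type*} [ConditionallyCompleteLinearOrder α]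
    {I : Set ι} (hI : I.Finite) {A : ι → Set α}
    (hne : ∀ i ∈ I, (A i).Nonempty) (hbdd : ∀ i ∈ I, BddBelow (A i)) :
    sInf (⋃ i ∈ I, A i) = sInf ((fun i => sInf (A i)) '' I) := by
  rcases I.eq_empty_or_nonempty with rfl | ⟨i₀, hi₀⟩
  · simp
  have hUne : (⋃ i ∈ I, A i).Nonempty := (hne i₀ hi₀).mono (Set.subset_biUnion_of_mem hi₀)
  have hUbdd : BddBelow (⋃ i ∈ I, A i) := (hI.bddBelow_biUnion).2 hbdd
  apply le_antisymm
  · refine le_csInf ⟨_, i₀, hi₀, rfl⟩ ?_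
    rintro _ ⟨i, hi, rfl⟩
    exact csInf_le_csInf hUbdd (hne i hi) (Set.subset_biUnion_of_mem hi)
  · refine le_csInf hUne ?_
    intro x hx
    obtain ⟨i, hi, hx⟩ := Set.mem_iUnion₂.1 hx
    exact (csInf_le (hI.image _).bddBelow ⟨i, hi, rfl⟩).trans (csInf_le (hbdd i hi) hx)

theorem csInf_image_add_const {s : Set ℝ} (hne : s.Nonempty) (hbdd : BddBelow s) (d : ℝ) :
    sInf ((· + d) '' s) = sInf s + d :=
  ((OrderIso.addRight d).map_csInf' hne hbdd).symm

lemma cost_nonneg (y : ℕ → ℝ) (a b : ℕ) (s1 s2 : ℝ) : 0 ≤ cost y a b s1 s2 :=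
  Finset.sum_nonneg fun _ _ => sq_nonneg _

section Segmentation

variable {y : ℕ → ℝ} {S : Finset ℝ} {β : ℝ}

lemma nonneg_of_mem_segCosts (hβ : 0 ≤ β) {t : ℕ} {v c : ℝ}
    (hc : c ∈ segCosts y S β t v) : 0 ≤ c := by
  obtain ⟨k, τ, s, -, -, -, -, -, rfl⟩ := hc
  rw [Finset.sum_range_succ, ← add_assoc, add_sub_cancel_right]
  exact add_nonneg (Finset.sum_nonneg fun i _ => add_nonneg (cost_nonneg ..) hβ)
    (cost_nonneg ..)

lemma cost_mem_segCosts {t : ℕ} (ht : 0 < t) {u v : ℝ} (hu : u ∈ S) (hv : v ∈ S) :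
    cost y 0 t u v ∈ segCosts y S β t v := by
  refine ⟨0, fun i => if i = 0 then 0 else t, fun i => if i = 0 then u else v,
    rfl, rfl, ?_, ?_, rfl, by simp⟩
  · simpa using ht
  · intro i _
    dsimp only
    split_ifs
    exacts [hu, hv]

lemma add_cost_mem_segCosts {t' t : ℕ} (htt : t' < t) {u v c : ℝ} (hv : v ∈ S)
    (hc : c ∈ segCosts y S β t' u) :
    c + (cost y t' t u v + β) ∈ segCosts y S β t v := by
  obtain ⟨k, τ, s, h0, hk, hτ, hs, hsu, rfl⟩ := hc
  refine ⟨k + 1, fun i => if i ≤ k + 1 then τ i else t,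
    fun i => if i ≤ k + 1 then s i else v, by simpa using h0, by simp, ?_, ?_, by simp, ?_⟩
  · intro i hi
    rcases hi.lt_or_eq with hi | rfl
    · simpa [show i ≤ k + 1 by omega, show i + 1 ≤ k + 1 by omega] using hτ i (by omega)
    · simpa [hk] using htt
  · intro i _
    dsimp only
    split_ifs with h
    exacts [hs i h, hv]
  · have hprefix : ∀ i ∈ range (k + 1), i ≤ k + 1 ∧ i + 1 ≤ k + 1 := fun i hi => by
      simp only [mem_range] at hi; omega
    symm
    rw [Finset.sum_range_succ _ (k + 1), Finset.sum_congr rfl fun i hi => by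
      simp only [(hprefix i hi).1, (hprefix i hi).2, if_true]; rfl]
    simp only [le_refl, if_true, show ¬ k + 1 + 1 ≤ k + 1 by omega, if_false, hk, hsu]
    ring

/-- Costs of segmentations of `{1, …, t}` ending in state `u`, where for `t = 0` the empty
segmentation is given cost `-β`; thus `Qval y S β t u = sInf (prefixCosts y S β t u)`
for all `t`. -/
def prefixCosts (y : ℕ → ℝ) (S : Finset ℝ) (β : ℝ) (t : ℕ) (u : ℝ) : Set ℝ :=
  if t = 0 then {-β} else segCosts y S β t u

lemma Qval_eq_sInf_prefixCosts (t : ℕ) (u : ℝ) :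
    Qval y S β t u = sInf (prefixCosts y S β t u) := by
  unfold Qval prefixCosts
  split_ifs
  exacts [csInf_singleton _ |>.symm, rfl]

lemma prefixCosts_of_ne_zero {t : ℕ} (ht : t ≠ 0) (u : ℝ) :
    prefixCosts y S β t u = segCosts y S β t u :=
  if_neg ht

lemma prefixCosts_nonempty (t : ℕ) {u : ℝ} (hu : u ∈ S) :
    (prefixCosts y S β t u).Nonempty := by
  unfold prefixCosts
  split_ifs with ht
  · exact Set.singleton_nonempty _
  · exact ⟨_, cost_mem_segCosts (Nat.pos_of_ne_zero ht) hu hu⟩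

lemma bddBelow_prefixCosts (hβ : 0 ≤ β) (t : ℕ) (u : ℝ) :
    BddBelow (prefixCosts y S β t u) := by
  refine ⟨-β, fun c hc => ?_⟩
  unfold prefixCosts at hc
  split_ifs at hc
  · exact (Set.mem_singleton_iff.1 hc).ge
  · linarith [nonneg_of_mem_segCosts hβ hc]

lemma add_cost_mem_segCosts_of_mem_prefixCosts {t' t : ℕ} (htt : t' < t) {u v c : ℝ}
    (hu : u ∈ S) (hv : v ∈ S) (hc : c ∈ prefixCosts y S β t' u) :
    c + (cost y t' t u v + β) ∈ segCosts y S β t v := by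
  unfold prefixCosts at hc
  split_ifs at hc with ht'
  · subst ht' hc
    simpa using cost_mem_segCosts htt hu hv
  · exact add_cost_mem_segCosts htt hv hc

lemma exists_prefixCosts_of_mem_segCosts {t : ℕ} {v c : ℝ} (hc : c ∈ segCosts y S β t v) :
    ∃ t' < t, ∃ u ∈ S, ∃ c' ∈ prefixCosts y S β t' u,
      c = c' + (cost y t' t u v + β) := by
  obtain ⟨k, τ, s, h0, hk, hτ, hs, hsv, rfl⟩ := hc
  cases k with
  | zero =>
    refine ⟨0, by simpa [h0, hk] using hτ 0 le_rfl, s 0, hs 0 (by omega), -β, rfl, ?_⟩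
    simp [h0, hk, hsv]
  | succ k =>
    have hlast : τ (k + 1) < t := hk ▸ hτ (k + 1) le_rfl
    have hpos : τ (k + 1) ≠ 0 := ((Nat.zero_le _).trans_lt (hτ k (by omega))).ne'
    refine ⟨τ (k + 1), hlast, s (k + 1), hs (k + 1) (by omega),
      (∑ i ∈ range (k + 1), (cost y (τ i) (τ (i + 1)) (s i) (s (i + 1)) + β)) - β, ?_, ?_⟩
    · rw [prefixCosts_of_ne_zero hpos]
      exact ⟨k, τ, s, h0, rfl, fun i _ => hτ i (by omega), fun i _ => hs i (by omega),
        rfl, rfl⟩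
    · rw [Finset.sum_range_succ _ (k + 1), hk, hsv]
      ring

theorem segCosts_eq_biUnion {t : ℕ} {v : ℝ} (hv : v ∈ S) :
    segCosts y S β t v = ⋃ p ∈ Set.Iio t ×ˢ (S : Set ℝ),
      (· + (cost y p.1 t p.2 v + β)) '' prefixCosts y S β p.1 p.2 := by
  ext c
  simp only [Set.mem_iUnion, Set.mem_image, Set.mem_prod, Set.mem_Iio, Finset.mem_coe,
    Prod.exists, exists_prop]
  constructor
  · intro hc
    obtain ⟨t', ht', u, hu, c', hc', rfl⟩ := exists_prefixCosts_of_mem_segCosts hc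
    exact ⟨t', u, ⟨ht', hu⟩, c', hc', rfl⟩
  · rintro ⟨t', u, ⟨ht', hu⟩, c', hc', rfl⟩
    exact add_cost_mem_segCosts_of_mem_prefixCosts ht' hu hv hc'

end Segmentation

theorem slopeOP_update_rule_general (y : ℕ → ℝ) (S : Finset ℝ)
    (β : ℝ) (hβ : 0 < β) (t : ℕ) (ht : 1 ≤ t) (v : ℝ) (hv : v ∈ S) :
    Qval y S β t v =
      sInf { c | ∃ t' < t, ∃ u ∈ S,
        c = Qval y S β t' u + cost y t' t u v + β } := by
  have hindex : (Set.Iio t ×ˢ (S : Set ℝ)).Finite := (Set.finite_Iio t).prod S.finite_toSet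
  have hne : ∀ p ∈ Set.Iio t ×ˢ (S : Set ℝ), (prefixCosts y S β p.1 p.2).Nonempty :=
    fun p hp => prefixCosts_nonempty p.1 hp.2
  have hbdd : ∀ p : ℕ × ℝ, BddBelow (prefixCosts y S β p.1 p.2) :=
    fun p => bddBelow_prefixCosts hβ.le p.1 p.2
  have hshift : ∀ p ∈ Set.Iio t ×ˢ (S : Set ℝ),
      sInf ((· + (cost y p.1 t p.2 v + β)) '' prefixCosts y S β p.1 p.2) =
        Qval y S β p.1 p.2 + cost y p.1 t p.2 v + β := fun p hp => by
    rw [csInf_image_add_const (hne p hp) (hbdd p), Qval_eq_sInf_prefixCosts, add_assoc]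
  rw [Qval, if_neg (by omega), segCosts_eq_biUnion hv,
    csInf_biUnion_of_finite hindex (fun p hp => (hne p hp).image _)
      (fun p _ => add_left_mono.map_bddBelow (hbdd p)), Set.image_congr hshift]
  congr 1
  ext c
  simp only [Set.mem_image, Set.mem_prod, Set.mem_Iio, Finset.mem_coe, Prod.exists, and_assoc,
    Set.mem_ofPred_eq, eq_comm (a := c), exists_and_left]

theorem slopeOP_update_rule (y : ℕ → ℝ) (S : Finset ℝ) (hS : S.Nonempty)
    (β : ℝ) (hβ : 0 < β) (t : ℕ) (ht : 1 ≤ t) (v : ℝ) (hv : v ∈ S) :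
    Qval y S β t v =
      sInf { c | ∃ t' < t, ∃ u ∈ S,
        c = Qval y S β t' u + cost y t' t u v + β } :=
  slopeOP_update_rule_general y S β hβ t ht v hv
end

section
/- For the change-in-slope cost and any t' < t < T, u, v ∈ ℝ, the inequality C(y_{(t'+1):T}, u, v) ≥ C(y_{(t'+1):t}, u, v) + C(y_{(t+1):T}, v, v) is equivalent to (v−u)·[Σ_{i=t'+1}^{t} y_i (i−t')(T−t)/((t−t')(T−t')) + Σ_{i=t+1}^{T−1} y_i (T−i)/(T−t')] ≥ (v−u)(T−t)·[(u+2v)/6 + (v−u)/(12(t−t')(T−t'))]. -/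
open Finset

/-! Expand the squares: `(y - a)² - (y - b)² = (b - a) (2y - a - b)`. On `(t', t]` the short fit
exceeds the long one by `v - u` times the first weight of the affine side, on `(t, T]` the flat fit
exceeds it by `v - u` times the second weight (which vanishes at `T`, whence `Ioo`). So the cost
gap is `2 (v - u) Σ wᵢ yᵢ` minus the data-free `(v - u) Σ wᵢ (aᵢ + bᵢ)`, a sum of quadratics
in `i` evaluated through `Σ k` and `Σ k²`. -/

noncomputable def linInterp (a b : ℕ) (s1 s2 x : ℝ) : ℝ :=
  s1 + (s2 - s1) * ((x - a) / ((b : ℝ) - a))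

theorem cost_eq_sum_linInterp (y : ℕ → ℝ) (a b : ℕ) (s1 s2 : ℝ) :
    cost y a b s1 s2 = ∑ i ∈ Ioc a b, (y i - linInterp a b s1 s2 i) ^ 2 :=
  rfl

theorem cost_const (y : ℕ → ℝ) (a b : ℕ) (s : ℝ) :
    cost y a b s s = ∑ i ∈ Ioc a b, (y i - s) ^ 2 := by
  simp [cost]

theorem sum_sq_sub_sub_sum_sq_sub_eq {ι : Type*} (s : Finset ι) (y a b w : ι → ℝ) (c : ℝ)
    (h : ∀ i ∈ s, b i - a i = c * w i) :
    ∑ i ∈ s, (y i - a i) ^ 2 - ∑ i ∈ s, (y i - b i) ^ 2 =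
      2 * c * ∑ i ∈ s, y i * w i - c * ∑ i ∈ s, w i * (a i + b i) := by
  rw [mul_sum, mul_sum, ← sum_sub_distrib, ← sum_sub_distrib]
  refine sum_congr rfl fun i hi => ?_
  have hb : b i = a i + c * w i := by linarith [h i hi]
  rw [hb]
  ring

theorem sum_Ioc_quadratic (a n : ℕ) (p q r : ℝ) :
    ∑ i ∈ Ioc a (a + n), (p + q * ((i : ℝ) - a) + r * ((i : ℝ) - a) ^ 2) =
      p * n + q * (n * (n + 1) / 2) + r * (n * (n + 1) * (2 * n + 1) / 6) := by
  induction n with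
  | zero => simp
  | succ n ih =>
    rw [← add_assoc, sum_Ioc_succ_top (by omega), ih]
    push_cast
    ring

section Segments

variable {t' t T : ℕ} (h1 : t' < t) (h2 : t < T) (u v : ℝ)
include h1 h2

theorem linInterp_short_sub_linInterp_long {i : ℕ} :
    linInterp t' t u v i - linInterp t' T u v i =
      (v - u) * (((i : ℝ) - t') * ((T : ℝ) - t) / (((t : ℝ) - t') * ((T : ℝ) - t'))) := by
  have hn : (t : ℝ) - t' ≠ 0 := sub_ne_zero.2 (by exact_mod_cast h1.ne')
  have hN : (T : ℝ) - t' ≠ 0 := sub_ne_zero.2 (by exact_mod_cast (h1.trans h2).ne')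
  unfold linInterp
  field_simp
  ring

theorem flat_sub_linInterp_long {i : ℕ} :
    v - linInterp t' T u v i = (v - u) * (((T : ℝ) - i) / ((T : ℝ) - t')) := by
  have hN : (T : ℝ) - t' ≠ 0 := sub_ne_zero.2 (by exact_mod_cast (h1.trans h2).ne')
  unfold linInterp
  field_simp
  ring

theorem sum_weight_mul_linInterp_add_left :
    ∑ i ∈ Ioc t' t, ((i : ℝ) - t') * ((T : ℝ) - t) / (((t : ℝ) - t') * ((T : ℝ) - t')) *
        (linInterp t' T u v i + linInterp t' t u v i) =
      ((T : ℝ) - t) * ((t : ℝ) - t' + 1) * (u / ((T : ℝ) - t') +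
        (v - u) * ((T : ℝ) - t' + ((t : ℝ) - t')) * (2 * ((t : ℝ) - t') + 1) /
          (6 * ((t : ℝ) - t') * ((T : ℝ) - t') ^ 2)) := by
  have hn : (t : ℝ) - t' ≠ 0 := sub_ne_zero.2 (by exact_mod_cast h1.ne')
  have hN : (T : ℝ) - t' ≠ 0 := sub_ne_zero.2 (by exact_mod_cast (h1.trans h2).ne')
  simp only [linInterp]
  set n : ℝ := (t : ℝ) - t'
  set N : ℝ := (T : ℝ) - t'
  have hsummand : ∀ i ∈ Ioc t' t, ((i : ℝ) - t') * ((T : ℝ) - t) / (n * N) *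
      (u + (v - u) * (((i : ℝ) - t') / N) + (u + (v - u) * (((i : ℝ) - t') / n))) =
        0 + 2 * u * (N - n) / (n * N) * ((i : ℝ) - t') +
          (v - u) * (N - n) * (N + n) / (n * N) ^ 2 * ((i : ℝ) - t') ^ 2 := by
    intro i _
    field_simp
    ring
  obtain ⟨k, rfl⟩ := Nat.exists_eq_add_of_le h1.le
  rw [sum_congr rfl hsummand, sum_Ioc_quadratic]
  have hk : (k : ℝ) = n := by simp [n]
  rw [hk]
  field_simp
  ring

theorem sum_weight_mul_linInterp_add_right :
    ∑ i ∈ Ioc t T, ((T : ℝ) - i) / ((T : ℝ) - t') * (linInterp t' T u v i + v) =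
      ((T : ℝ) - t) * ((T : ℝ) - t - 1) * (v / ((T : ℝ) - t') -
        (v - u) * (2 * ((T : ℝ) - t) - 1) / (6 * ((T : ℝ) - t') ^ 2)) := by
  have hN : (T : ℝ) - t' ≠ 0 := sub_ne_zero.2 (by exact_mod_cast (h1.trans h2).ne')
  simp only [linInterp]
  set m : ℝ := (T : ℝ) - t
  set N : ℝ := (T : ℝ) - t'
  set c : ℝ := (v - u) / N
  have hsummand : ∀ i ∈ Ioc t T, ((T : ℝ) - i) / N * (u + (v - u) * (((i : ℝ) - t') / N) + v) =
      (2 * v * m - c * m ^ 2) / N + (2 * c * m - 2 * v) / N * ((i : ℝ) - t) +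
        -c / N * ((i : ℝ) - t) ^ 2 := by
    intro i _
    simp only [c]
    field_simp
    ring
  obtain ⟨k, rfl⟩ := Nat.exists_eq_add_of_le h2.le
  rw [sum_congr rfl hsummand, sum_Ioc_quadratic]
  have hk : (k : ℝ) = m := by simp [m]
  rw [hk]
  simp only [c]
  field_simp
  ring

theorem cost_sub_cost_add_cost (y : ℕ → ℝ) :
    cost y t' T u v - (cost y t' t u v + cost y t T v v) =
      2 * ((v - u) * (∑ i ∈ Ioc t' t,
            y i * (((i : ℝ) - t') * ((T : ℝ) - t) / (((t : ℝ) - t') * ((T : ℝ) - t'))) +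
          ∑ i ∈ Ioo t T, y i * (((T : ℝ) - i) / ((T : ℝ) - t'))) -
        (v - u) * ((T : ℝ) - t) *
          ((u + 2 * v) / 6 + (v - u) / (12 * ((t : ℝ) - t') * ((T : ℝ) - t')))) := by
  have hn : (t : ℝ) - t' ≠ 0 := sub_ne_zero.2 (by exact_mod_cast h1.ne')
  have hN : (T : ℝ) - t' ≠ 0 := sub_ne_zero.2 (by exact_mod_cast (h1.trans h2).ne')
  have hleft := sum_sq_sub_sub_sum_sq_sub_eq (Ioc t' t) y (fun i => linInterp t' T u v i)
    (fun i => linInterp t' t u v i) _ _ fun i _ => linInterp_short_sub_linInterp_long h1 h2 u v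
  have hright := sum_sq_sub_sub_sum_sq_sub_eq (Ioc t T) y (fun i => linInterp t' T u v i)
    (fun _ => v) _ _ fun i _ => flat_sub_linInterp_long h1 h2 u v
  rw [sum_weight_mul_linInterp_add_left h1 h2 u v] at hleft
  rw [sum_weight_mul_linInterp_add_right h1 h2 u v] at hright
  have hIoo : ∑ i ∈ Ioc t T, y i * (((T : ℝ) - i) / ((T : ℝ) - t')) =
      ∑ i ∈ Ioo t T, y i * (((T : ℝ) - i) / ((T : ℝ) - t')) := by
    rw [← Ioo_insert_right h2, sum_insert (by simp)]
    simp
  have hsplit : cost y t' T u v = ∑ i ∈ Ioc t' t, (y i - linInterp t' T u v i) ^ 2 +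
      ∑ i ∈ Ioc t T, (y i - linInterp t' T u v i) ^ 2 := by
    rw [cost_eq_sum_linInterp, sum_Ioc_consecutive _ h1.le h2.le]
  have hconst : ((T : ℝ) - t) * ((t : ℝ) - t' + 1) * (u / ((T : ℝ) - t') +
        (v - u) * ((T : ℝ) - t' + ((t : ℝ) - t')) * (2 * ((t : ℝ) - t') + 1) /
          (6 * ((t : ℝ) - t') * ((T : ℝ) - t') ^ 2)) +
      ((T : ℝ) - t) * ((T : ℝ) - t - 1) * (v / ((T : ℝ) - t') -
        (v - u) * (2 * ((T : ℝ) - t) - 1) / (6 * ((T : ℝ) - t') ^ 2)) =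
      2 * (((T : ℝ) - t) * ((u + 2 * v) / 6 +
        (v - u) / (12 * ((t : ℝ) - t') * ((T : ℝ) - t')))) := by
    field_simp
    ring
  rw [hsplit, cost_eq_sum_linInterp y t' t, cost_const, ← hIoo]
  linear_combination hleft + hright - (v - u) * hconst

end Segments

theorem dominance_iff_affine (y : ℕ → ℝ) (t' t T : ℕ) (h1 : t' < t)
    (h2 : t < T) (u v : ℝ) :
    (cost y t' T u v ≥ cost y t' t u v + cost y t T v v) ↔
    (v - u) *
        ((∑ i ∈ Finset.Ioc t' t,
            y i * ((((i : ℝ) - t') * ((T : ℝ) - t)) /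
              ((((t : ℝ) - t')) * ((T : ℝ) - t'))))
          + ∑ i ∈ Finset.Ioo t T, y i * (((T : ℝ) - i) / ((T : ℝ) - t')))
      ≥ (v - u) * ((T : ℝ) - t) *
          ((u + 2 * v) / 6 +
            (v - u) / (12 * ((t : ℝ) - t') * ((T : ℝ) - t'))) := by
  have := cost_sub_cost_add_cost h1 h2 u v y
  constructor <;> intro h <;> linarith
end
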